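/- Uniform-sampling Nyström error bound: if A is psd with all diagonal entries equal to 1 and pivots s₁,…,s_k are drawn i.i.d. uniformly from {1,…,N}, the expected trace-norm error of the resulting Nyström approximation Â⁽ᵏ⁾ satisfies E[tr(A - Â⁽ᵏ⁾)] ≤ (r-1)/k · tr(A) + (1 + 1/k) · tr(A - ⟦A⟧_r) for every r ≥ 1. -/

import Mathlib

open Matrix

/-- Sum of the `r` largest eigenvalues (Ky Fan). Junk value for non-Hermitian matrices. -/
noncomputable def sumTopEig {N : ℕ} (A : Matrix (Fin N) (Fin N) ℝ) (r : ℕ) : ℝ :=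
  if hA : A.IsHermitian then
    ⨆ s : {s : Finset (Fin N) // s.card = r}, ∑ i ∈ s.1, hA.eigenvalues i
  else 0

/-- `tr(M - ⟦M⟧_r)`: the sum of all eigenvalues of `M` beyond the `r` largest. -/
noncomputable def tailSum {N : ℕ} (A : Matrix (Fin N) (Fin N) ℝ) (r : ℕ) : ℝ :=
  A.trace - sumTopEig A r

/-- The principal submatrix `A(S,S)`. -/
def subSS {N : ℕ} (A : Matrix (Fin N) (Fin N) ℝ) (S : Finset (Fin N)) :
    Matrix {x // x ∈ S} {x // x ∈ S} ℝ :=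
  A.submatrix Subtype.val Subtype.val

/-- The column submatrix `A(:,S)`. -/
def subCols {N : ℕ} (A : Matrix (Fin N) (Fin N) ℝ) (S : Finset (Fin N)) :
    Matrix (Fin N) {x // x ∈ S} ℝ :=
  A.submatrix id Subtype.val

/-- The row submatrix `A(S,:)`. -/
def subRows {N : ℕ} (A : Matrix (Fin N) (Fin N) ℝ) (S : Finset (Fin N)) :
    Matrix {x // x ∈ S} (Fin N) ℝ :=
  A.submatrix Subtype.val id

/-!
Write `A = BᵀB`. For a generalized inverse `X` of `A(S,S) = B(:,S)ᵀB(:,S)`, the matrix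
`Π_S = B(:,S) X B(:,S)ᵀ` is the orthogonal projector onto the span of the sampled columns of `B`,
and `A - Â = Bᵀ(I - Π_S)B`. Over an orthonormal eigenbasis `uⱼ` of `A` this gives
`tr(A - Â) = ∑ⱼ ‖(I - Π_S) B uⱼ‖²`, where `‖B uⱼ‖² = λⱼ`. Each term is at most `λⱼ`, and also at
most `‖B uⱼ - w‖²` for every `w` in the span. Taking for `w` the unbiased estimator
`(N/k) ∑ₘ uⱼ(sₘ) B(:,sₘ)` of `B uⱼ = ∑ₜ uⱼ(t) B(:,t)`, whose mean squared error is `(N - λⱼ)/k`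
because the columns of `B` are unit vectors, bounds the expectation of the term by `(N - λⱼ)/k`.
The second bound is used for the `r` largest eigenvalues and the first for the others.
-/

open Finset

section UniformSampling

variable {ι E : Type*} [Fintype ι] [NormedAddCommGroup E] [InnerProductSpace ℝ E]

theorem sum_norm_sum_comp_sq_of_sum_eq_zero {g : ι → E} (hg : ∑ a, g a = 0) (k : ℕ) :
    ∑ v : Fin k → ι, ‖∑ m, g (v m)‖ ^ 2 = k * Fintype.card ι ^ (k - 1) * ∑ a, ‖g a‖ ^ 2 := by
  induction k with
  | zero => simp
  | succ k ih =>
    rw [← (Fin.consEquiv fun _ => ι).sum_comp, Fintype.sum_prod_type]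
    simp only [Fin.consEquiv_apply, Fin.sum_univ_succ, Fin.cons_zero, Fin.cons_succ,
      norm_add_sq_real]
    have hcross : ∀ v : Fin k → ι, ∑ a, inner ℝ (g a) (∑ m, g (v m)) = 0 := fun v => by
      rw [← sum_inner, hg, inner_zero_left]
    simp only [sum_add_distrib, ← mul_sum, sum_comm (γ := ι), hcross, sum_const, card_univ,
      Fintype.card_fun, Fintype.card_fin, ih, nsmul_eq_mul]
    rcases k with _ | k
    · simp
    · push_cast
      ring

/-- The unbiased estimator of `∑ₜ f t` from `k` indices drawn uniformly at random. -/
noncomputable def uniformSumEstimator {k : ℕ} (f : ι → E) (v : Fin k → ι) : E :=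
  ((Fintype.card ι : ℝ) / k) • ∑ m, f (v m)

theorem sum_norm_sub_uniformSumEstimator_sq (f : ι → E) {k : ℕ} (hk : 0 < k) :
    ∑ v : Fin k → ι, ‖∑ t, f t - uniformSumEstimator f v‖ ^ 2 =
      Fintype.card ι ^ k * (Fintype.card ι * ∑ t, ‖f t‖ ^ 2 - ‖∑ t, f t‖ ^ 2) / k := by
  set n : ℝ := (Fintype.card ι : ℝ) with hn
  set x := ∑ t, f t
  have hk' : (k : ℝ) ≠ 0 := by positivity
  have hcentered : ∑ t, (n • f t - x) = 0 := by
    simp [sum_sub_distrib, ← smul_sum, x, n, card_univ, Nat.cast_smul_eq_nsmul]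
  have hdev : ∀ v : Fin k → ι,
      x - uniformSumEstimator f v = (-(k : ℝ)⁻¹) • ∑ m, (n • f (v m) - x) := fun v => by
    simp only [uniformSumEstimator, sum_sub_distrib, ← smul_sum, sum_const, card_univ,
      Fintype.card_fin, smul_sub, smul_smul]
    rw [← hn, ← Nat.cast_smul_eq_nsmul ℝ]
    match_scalars <;> field_simp
  have hvar : ∑ t, ‖n • f t - x‖ ^ 2 = n * (n * ∑ t, ‖f t‖ ^ 2 - ‖x‖ ^ 2) := by
    simp only [norm_sub_sq_real, norm_smul, real_inner_smul_left, mul_pow, sum_add_distrib,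
      sum_sub_distrib, ← mul_sum, ← sum_inner, sum_const, card_univ, nsmul_eq_mul]
    simp only [RCLike.norm_natCast, inner_self_eq_norm_sq_to_K, Real.ringHom_apply, n, x]
    ring
  simp only [hdev, norm_smul, norm_neg, norm_inv, RCLike.norm_natCast, mul_pow, ← mul_sum,
    sum_norm_sum_comp_sq_of_sum_eq_zero hcentered, hvar, ← pow_sub_one_mul hk.ne' n]
  field_simp
  ring

end UniformSampling

section Projection

variable {m l : Type*} [Fintype m] [Fintype l]

theorem exists_eq_transpose_mul_self {A : Matrix m m ℝ} (hA : A.PosSemidef) :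
    ∃ B : Matrix m m ℝ, A = Bᵀ * B := by
  classical
  open scoped MatrixOrder in exact CStarAlgebra.nonneg_iff_eq_star_mul_self.mp hA.nonneg

theorem mul_mul_transpose_mul_self_of_generalizedInverse {C : Matrix m l ℝ} {X : Matrix l l ℝ}
    (hX : Cᵀ * C * X * (Cᵀ * C) = Cᵀ * C) : C * X * (Cᵀ * C) = C := by
  classical
  have h := (conjTranspose_mul_self_mul_eq_zero C (X * (Cᵀ * C) - 1)).mp (by
    rw [conjTranspose_eq_transpose_of_trivial, Matrix.mul_sub, ← Matrix.mul_assoc, hX,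
      Matrix.mul_one, sub_self])
  rwa [Matrix.mul_sub, Matrix.mul_one, ← Matrix.mul_assoc, sub_eq_zero] at h

theorem isStarProjection_mul_mul_transpose {C : Matrix m l ℝ} {X : Matrix l l ℝ}
    (hX : Cᵀ * C * X * (Cᵀ * C) = Cᵀ * C) : IsStarProjection (C * X * Cᵀ) := by
  have hXt : Cᵀ * C * Xᵀ * (Cᵀ * C) = Cᵀ * C := by
    simpa [Matrix.transpose_mul, Matrix.mul_assoc] using congrArg Matrix.transpose hX
  have hC := mul_mul_transpose_mul_self_of_generalizedInverse hX
  have hCt := mul_mul_transpose_mul_self_of_generalizedInverse hXt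
  -- `Π = Πᵀ Π`, and the right-hand side is symmetric
  have hsq : (C * X * Cᵀ)ᵀ * (C * X * Cᵀ) = C * X * Cᵀ := by
    calc (C * X * Cᵀ)ᵀ * (C * X * Cᵀ) = C * Xᵀ * (Cᵀ * C) * X * Cᵀ := by
          simp only [Matrix.transpose_mul, Matrix.transpose_transpose, Matrix.mul_assoc]
      _ = C * X * Cᵀ := by rw [hCt]
  refine ⟨?_, ?_⟩
  · calc C * X * Cᵀ * (C * X * Cᵀ) = C * X * (Cᵀ * C) * X * Cᵀ := by
          simp only [Matrix.mul_assoc]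
      _ = C * X * Cᵀ := by rw [hC]
  · rw [IsSelfAdjoint, star_eq_conjTranspose, conjTranspose_eq_transpose_of_trivial, ← hsq,
      Matrix.transpose_mul, Matrix.transpose_transpose]

theorem norm_toLp_sq_eq_dotProduct (z : m → ℝ) : ‖WithLp.toLp 2 z‖ ^ 2 = z ⬝ᵥ z := by
  rw [← real_inner_self_eq_norm_sq, EuclideanSpace.inner_toLp_toLp, star_trivial]

open scoped MatrixOrder in
theorem dotProduct_mulVec_le_of_isStarProjection {Q : Matrix m m ℝ} (hQ : IsStarProjection Q)
    {w : m → ℝ} (hw : Q *ᵥ w = 0) (x : m → ℝ) :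
    x ⬝ᵥ (Q *ᵥ x) ≤ (x - w) ⬝ᵥ (x - w) := by
  classical
  have hsymm : ∀ y z : m → ℝ, y ⬝ᵥ (Q *ᵥ z) = (Q *ᵥ y) ⬝ᵥ z := fun y z => by
    rw [dotProduct_mulVec, ← mulVec_transpose, ← conjTranspose_eq_transpose_of_trivial,
      ← star_eq_conjTranspose, hQ.isSelfAdjoint.star_eq, dotProduct_comm]
  have hshift : x ⬝ᵥ (Q *ᵥ x) = (x - w) ⬝ᵥ (Q *ᵥ (x - w)) := by
    rw [mulVec_sub, hw, sub_zero, sub_dotProduct, hsymm w, hw, zero_dotProduct, sub_zero]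
  have h := (Matrix.nonneg_iff_posSemidef.mp hQ.one_sub.nonneg).dotProduct_mulVec_nonneg (x - w)
  rw [star_trivial, sub_mulVec, one_mulVec, dotProduct_sub] at h
  linarith

theorem sum_dotProduct_mulVec_le_of_uniformSampling [DecidableEq l] {k : ℕ} (hk : 0 < k)
    {B : Matrix m l ℝ} (hB : ∀ t, (Bᵀ * B) t t = 1)
    {Q : Finset l → Matrix m m ℝ} (hQ : ∀ S, IsStarProjection (Q S))
    (hQB : ∀ S, ∀ t ∈ S, Q S *ᵥ B.col t = 0) {y : l → ℝ} (hy : y ⬝ᵥ y = 1) :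
    ∑ v : Fin k → l, (B *ᵥ y) ⬝ᵥ (Q (univ.image v) *ᵥ (B *ᵥ y)) ≤
      Fintype.card l ^ k * (Fintype.card l - (B *ᵥ y) ⬝ᵥ (B *ᵥ y)) / k := by
  let f : l → EuclideanSpace ℝ m := fun t => WithLp.toLp 2 (y t • B.col t)
  have hf : ∑ t, ‖f t‖ ^ 2 = 1 := by
    have hcol : ∀ t, B.col t ⬝ᵥ B.col t = 1 := fun t => by simpa [mul_apply, dotProduct] using hB t
    simp only [f, norm_toLp_sq_eq_dotProduct, smul_dotProduct, dotProduct_smul, hcol, smul_eq_mul, mul_one]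
    exact hy
  have hx : ∑ t, f t = WithLp.toLp 2 (B *ᵥ y) := by
    rw [← WithLp.toLp_sum]
    congr 1
    ext i
    simp [mulVec, dotProduct, mul_comm]
  calc _ ≤ ∑ v : Fin k → l, ‖∑ t, f t - uniformSumEstimator f v‖ ^ 2 := by
        refine sum_le_sum fun v _ => ?_
        set w : m → ℝ := ((Fintype.card l : ℝ) / k) • ∑ i, y (v i) • B.col (v i)
        have hw : Q (univ.image v) *ᵥ w = 0 := by
          simp only [w, mulVec_smul, mulVec_sum, hQB _ _ (mem_image_of_mem v (mem_univ _)),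
            smul_zero, sum_const_zero]
        have hfw : uniformSumEstimator f v = WithLp.toLp 2 w := by
          simp only [uniformSumEstimator, f, w, WithLp.toLp_smul, WithLp.toLp_sum]
        rw [hx, hfw, ← WithLp.toLp_sub, norm_toLp_sq_eq_dotProduct]
        exact dotProduct_mulVec_le_of_isStarProjection (hQ _) hw _
    _ = _ := by rw [sum_norm_sub_uniformSumEstimator_sq f hk, hf, hx, norm_toLp_sq_eq_dotProduct, mul_one]

end Projection

section Nystrom

variable {N : ℕ}

def nystromResidual (B : Matrix (Fin N) (Fin N) ℝ) (S : Finset (Fin N)) (X : Matrix S S ℝ) :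
    Matrix (Fin N) (Fin N) ℝ :=
  1 - subCols B S * X * (subCols B S)ᵀ

theorem subSS_transpose_mul_self (B : Matrix (Fin N) (Fin N) ℝ) (S : Finset (Fin N)) :
    subSS (Bᵀ * B) S = (subCols B S)ᵀ * subCols B S := by
  simp only [subSS, subCols, transpose_submatrix, submatrix_mul _ _ _ id _ Function.bijective_id]

theorem transpose_mul_self_sub_nystrom (B : Matrix (Fin N) (Fin N) ℝ) (S : Finset (Fin N))
    (X : Matrix S S ℝ) :
    Bᵀ * B - subCols (Bᵀ * B) S * X * subRows (Bᵀ * B) S = Bᵀ * nystromResidual B S X * B := by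
  have hcols : subCols (Bᵀ * B) S = Bᵀ * subCols B S := by
    rw [subCols, subCols, submatrix_mul _ _ _ id _ Function.bijective_id, submatrix_id_id]
  have hrows : subRows (Bᵀ * B) S = (subCols B S)ᵀ * B := by
    rw [subRows, subCols, transpose_submatrix, submatrix_mul _ _ _ id _ Function.bijective_id,
      submatrix_id_id]
  simp only [hcols, hrows, nystromResidual, Matrix.mul_sub, Matrix.sub_mul, Matrix.mul_one,
    Matrix.mul_assoc]

variable {B : Matrix (Fin N) (Fin N) ℝ} {S : Finset (Fin N)} {X : Matrix S S ℝ}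

theorem isStarProjection_nystromResidual
    (hX : subSS (Bᵀ * B) S * X * subSS (Bᵀ * B) S = subSS (Bᵀ * B) S) :
    IsStarProjection (nystromResidual B S X) := by
  rw [subSS_transpose_mul_self] at hX
  exact (isStarProjection_mul_mul_transpose hX).one_sub

theorem nystromResidual_mulVec_col
    (hX : subSS (Bᵀ * B) S * X * subSS (Bᵀ * B) S = subSS (Bᵀ * B) S) {t : Fin N} (ht : t ∈ S) :
    nystromResidual B S X *ᵥ B.col t = 0 := by
  rw [subSS_transpose_mul_self] at hX
  have h : nystromResidual B S X * subCols B S = 0 := by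
    rw [nystromResidual, Matrix.sub_mul, Matrix.one_mul, Matrix.mul_assoc (subCols B S * X),
      mul_mul_transpose_mul_self_of_generalizedInverse hX, sub_self]
  funext i
  simpa [mulVec, dotProduct, mul_apply, subCols] using congrFun (congrFun h i) ⟨t, ht⟩

end Nystrom

theorem trace_transpose_mul_mul_eq_sum {n : Type*} [Fintype n] [DecidableEq n]
    (B Q : Matrix n n ℝ) (u : OrthonormalBasis n ℝ (EuclideanSpace ℝ n)) :
    (Bᵀ * Q * B).trace = ∑ j, (B *ᵥ u j) ⬝ᵥ (Q *ᵥ (B *ᵥ u j)) := by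
  rw [← trace_toLin_eq _ (PiLp.basisFun 2 ℝ n), ← toLpLin_eq_toLin,
    LinearMap.trace_eq_sum_inner _ u]
  refine sum_congr rfl fun j _ => ?_
  rw [EuclideanSpace.inner_eq_star_dotProduct, star_trivial, dotProduct_comm, ofLp_toLpLin,
    toLin'_apply, ← mulVec_mulVec, ← mulVec_mulVec, dotProduct_mulVec, vecMul_transpose]

section TopEigenvalues

variable {N : ℕ} {A : Matrix (Fin N) (Fin N) ℝ}

theorem exists_card_eq_sumTopEig_eq (hA : A.IsHermitian) {r : ℕ} (hr : r ≤ N) :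
    ∃ J : Finset (Fin N), J.card = r ∧ sumTopEig A r = ∑ i ∈ J, hA.eigenvalues i := by
  have : Nonempty {s : Finset (Fin N) // s.card = r} := by
    obtain ⟨J, -, hJ⟩ := exists_subset_card_eq (s := (univ : Finset (Fin N))) (by simpa using hr)
    exact ⟨⟨J, hJ⟩⟩
  set f := fun s : {s : Finset (Fin N) // s.card = r} => ∑ i ∈ s.1, hA.eigenvalues i
  obtain ⟨J, hJ⟩ := Finite.exists_max f
  refine ⟨J.1, J.2, ?_⟩
  rw [sumTopEig, dif_pos hA]
  exact le_antisymm (ciSup_le hJ) (le_ciSup (Set.finite_range f).bddAbove J)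

theorem sumTopEig_eq_zero_of_lt {r : ℕ} (hr : N < r) : sumTopEig A r = 0 := by
  have : IsEmpty {s : Finset (Fin N) // s.card = r} :=
    ⟨fun s => by have := card_le_univ s.1; simp only [s.2, Fintype.card_fin] at this; omega⟩
  unfold sumTopEig
  split_ifs <;> simp

theorem sum_le_of_le_eigenvalues (hA : A.PosSemidef) (k r : ℕ) {e : Fin N → ℝ}
    (he : ∀ j, e j ≤ hA.1.eigenvalues j) (he' : ∀ j, e j ≤ (A.trace - hA.1.eigenvalues j) / k) :
    ∑ j, e j ≤ ((r : ℝ) - 1) / k * A.trace + (1 + 1 / (k : ℝ)) * tailSum A r := by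
  have htr : A.trace = ∑ j, hA.1.eigenvalues j := by simpa using hA.1.trace_eq_sum_eigenvalues
  rcases le_or_gt r N with hr | hr
  · obtain ⟨J, hJ, hsum⟩ := exists_card_eq_sumTopEig_eq hA.1 hr
    have hJc : ∑ j ∈ univ \ J, e j ≤ A.trace - sumTopEig A r := by
      rw [htr, hsum, ← sum_sdiff (subset_univ J) (f := hA.1.eigenvalues), add_sub_cancel_right]
      exact sum_le_sum fun j _ => he j
    have hJ' : ∑ j ∈ J, e j ≤ (r * A.trace - sumTopEig A r) / k := by
      rw [hsum, ← hJ, ← nsmul_eq_mul, ← sum_const, ← sum_sub_distrib, sum_div]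
      exact sum_le_sum fun j _ => he' j
    rw [← sum_sdiff (subset_univ J), tailSum]
    calc _ ≤ A.trace - sumTopEig A r + (r * A.trace - sumTopEig A r) / k := add_le_add hJc hJ'
      _ = _ := by ring
  · have htr0 : 0 ≤ A.trace := htr ▸ sum_nonneg fun j _ => hA.eigenvalues_nonneg j
    rw [tailSum, sumTopEig_eq_zero_of_lt hr, sub_zero]
    calc ∑ j, e j ≤ A.trace := htr ▸ sum_le_sum fun j _ => he j
      _ ≤ A.trace + r * A.trace / k := le_add_of_nonneg_right (by positivity)
      _ = _ := by ring

end TopEigenvalues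

theorem uniform_sampling_nystrom_bound_general {N k r : ℕ} (hk : 0 < k)
    (A : Matrix (Fin N) (Fin N) ℝ) (hA : A.PosSemidef) (hdiag : ∀ i, A i i = 1)
    (P : (S : Finset (Fin N)) → Matrix {x // x ∈ S} {x // x ∈ S} ℝ)
    (hP1 : ∀ S, subSS A S * P S * subSS A S = subSS A S) :
    (1 / (N : ℝ) ^ k) * ∑ v : Fin k → Fin N,
        (A - subCols A (Finset.image v Finset.univ) * P (Finset.image v Finset.univ) *
          subRows A (Finset.image v Finset.univ)).trace
      ≤ ((r : ℝ) - 1) / k * A.trace + (1 + 1 / (k : ℝ)) * tailSum A r := by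
  obtain ⟨B, rfl⟩ := exists_eq_transpose_mul_self hA
  set u := hA.1.eigenvectorBasis
  have hunit : ∀ j, (u j).ofLp ⬝ᵥ (u j).ofLp = 1 := fun j => by
    rw [← norm_toLp_sq_eq_dotProduct, WithLp.toLp_ofLp, u.orthonormal.1 j, one_pow]
  have hnorm : ∀ j, (B *ᵥ u j) ⬝ᵥ (B *ᵥ u j) = hA.1.eigenvalues j := fun j => by
    rw [dotProduct_mulVec, ← vecMul_transpose, vecMul_vecMul, ← dotProduct_mulVec,
      hA.1.mulVec_eigenvectorBasis, dotProduct_smul, hunit j, smul_eq_mul, mul_one]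
  have htr : (Bᵀ * B).trace = N := by simp [trace, hdiag]
  simp only [transpose_mul_self_sub_nystrom, trace_transpose_mul_mul_eq_sum _ _ u]
  rw [sum_comm, mul_sum]
  refine sum_le_of_le_eigenvalues hA k r (fun j => ?_) (fun j => ?_) <;>
    rw [one_div_mul_eq_div, div_le_iff₀' (by have := j.pos; positivity)]
  · calc _ ≤ ∑ v : Fin k → Fin N, (B *ᵥ u j) ⬝ᵥ (B *ᵥ u j) := sum_le_sum fun v _ => by
          simpa using dotProduct_mulVec_le_of_isStarProjection
            (isStarProjection_nystromResidual (hP1 _)) (mulVec_zero _) (B *ᵥ u j)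
      _ = _ := by simp [hnorm]
  · simpa [htr, hnorm, mul_div_assoc] using sum_dotProduct_mulVec_le_of_uniformSampling hk hdiag
      (fun S => isStarProjection_nystromResidual (hP1 S))
      (fun S _ => nystromResidual_mulVec_col (hP1 S)) (hunit j)

/-- Uniform-sampling Nyström error bound: if `A` is psd with unit diagonal and `k` pivots
are drawn i.i.d. uniformly from `{1,…,N}`, then
`E[tr(A - Â⁽ᵏ⁾)] ≤ (r-1)/k · tr A + (1 + 1/k) · tr(A - ⟦A⟧_r)`.
The pseudoinverse `A(S,S)†` of each principal submatrix is supplied as a family `P`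
satisfying the four Penrose conditions. -/
theorem uniform_sampling_nystrom_bound {N k r : ℕ} (hN : 0 < N) (hk : 0 < k) (hr : 1 ≤ r)
    (A : Matrix (Fin N) (Fin N) ℝ) (hA : A.PosSemidef) (hdiag : ∀ i, A i i = 1)
    (P : (S : Finset (Fin N)) → Matrix {x // x ∈ S} {x // x ∈ S} ℝ)
    (hP1 : ∀ S, subSS A S * P S * subSS A S = subSS A S)
    (hP2 : ∀ S, P S * subSS A S * P S = P S)
    (hP3 : ∀ S, (subSS A S * P S)ᵀ = subSS A S * P S)
    (hP4 : ∀ S, (P S * subSS A S)ᵀ = P S * subSS A S) :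
    (1 / (N : ℝ) ^ k) * ∑ v : Fin k → Fin N,
        (A - subCols A (Finset.image v Finset.univ) * P (Finset.image v Finset.univ) *
          subRows A (Finset.image v Finset.univ)).trace
      ≤ ((r : ℝ) - 1) / k * A.trace + (1 + 1 / (k : ℝ)) * tailSum A r :=
  uniform_sampling_nystrom_bound_general hk A hA hdiag P hP1
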